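/- Let n, d ≥ 1 be positive integers and let S ⊆ ℤⁿ be a finite generating set such that for each g ∈ S, the set {1 ≤ i ≤ n : π_i(g) ≠ 0} has size either 1 or n. Then there exist a positive integer Δ ≥ d and a clopen subset M ⊆ F(2^{ℤⁿ}) such that: (1) for any distinct x, y ∈ M in the same orbit, ρ(x,y) ≥ d; (2) for every g ∈ S and x ∈ F(2^{ℤⁿ}) there are non-negative integers a, b ≤ Δ with (a·g)·x ∈ M and (−b·g)·x ∈ M. -/

import Mathlib

/-- The space `2^{ℤⁿ}` with the product topology. -/
abbrev Space (n : ℕ) : Type := (Fin n → ℤ) → Bool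

/-- The Bernoulli shift action: `(g · x)(h) = x(g + h)`. -/
def shift {n : ℕ} (g : Fin n → ℤ) (x : Space n) : Space n := fun h => x (g + h)

/-- The free part `F(2^{ℤⁿ})` of the shift action. -/
def FreePart (n : ℕ) : Set (Space n) := {x | ∀ g : Fin n → ℤ, g ≠ 0 → shift g x ≠ x}

/-- The sup norm on `ℤⁿ`, valued in `ℕ`. -/
def gnorm {n : ℕ} (g : Fin n → ℤ) : ℕ := Finset.univ.sup fun i => (g i).natAbs

/-!
Fix a locally constant proper coloring of the free part for a large sup-norm ball (the first
finite pattern that occurs at `x` and nowhere else in that ball around `x`); choosing points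
greedily by color then always yields clopen sets. First choose markers, a maximal
`Q`-separated set for the weighted norm `wnorm T g = ∑ Tⁱ |gᵢ|`, and let each point be owned by
the marker of least color within distance `Q`. Then `M` is chosen greedily, by owner color, among
the points whose offset from their owner lies in the kernel of `ψ g = ∑ gᵢ Tⁱ mod p`. As `ψ` is
injective on small vectors, two points of `M` with the same owner are far apart, and the greedy
rule separates points with different owners.

For the return times, call a point deep if its owner is also the least-colored marker in a
larger neighbourhood: all nearby points then have the same owner, and those in the right coset of
`ker ψ` lie in `M`. On the line `k ↦ k • s` a point that is not deep lies in a thin shell around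
some marker. Only boundedly many markers are near the line, and between two sign changes of the
coordinates, `wnorm T (v - k • s)` is strictly monotone in `k`, so each shell is met boundedly
often. Hence a deep point comes within a bounded number of steps, and fewer than `p` further steps
reach the coset.
-/

open Finset Filter Topology

variable {n : ℕ}

lemma shift_shift (a b : Fin n → ℤ) (x : Space n) : shift a (shift b x) = shift (b + a) x := by
  funext h; simp [shift, add_assoc]

lemma shift_zero (x : Space n) : shift 0 x = x := by
  funext h; simp [shift]

lemma shift_neg_shift (g : Fin n → ℤ) (x : Space n) : shift (-g) (shift g x) = x := by
  rw [shift_shift, add_neg_cancel, shift_zero]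

lemma shift_mem_freePart {x : Space n} (hx : x ∈ FreePart n) (g : Fin n → ℤ) :
    shift g x ∈ FreePart n := fun h hh he => hx h hh <| by
  simpa [shift_shift, add_comm g h, ← add_assoc, shift_zero] using congrArg (shift (-g)) he

lemma continuous_shift (g : Fin n → ℤ) : Continuous (shift g : Space n → Space n) :=
  continuous_pi fun _ => continuous_apply _

lemma gnorm_le_iff {g : Fin n → ℤ} {B : ℕ} : gnorm g ≤ B ↔ ∀ i, (g i).natAbs ≤ B := by
  simp [gnorm, Finset.sup_le_iff]

lemma natAbs_le_gnorm (g : Fin n → ℤ) (i : Fin n) : (g i).natAbs ≤ gnorm g :=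
  Finset.le_sup (f := fun i => (g i).natAbs) (mem_univ i)

lemma gnorm_neg (g : Fin n → ℤ) : gnorm (-g) = gnorm g := by
  simp [gnorm]

lemma gnorm_add_le (a b : Fin n → ℤ) : gnorm (a + b) ≤ gnorm a + gnorm b :=
  gnorm_le_iff.2 fun i =>
    (Int.natAbs_add_le _ _).trans (add_le_add (natAbs_le_gnorm a i) (natAbs_le_gnorm b i))

lemma gnorm_sub_le (a b : Fin n → ℤ) : gnorm (a - b) ≤ gnorm a + gnorm b := by
  simpa [sub_eq_add_neg, gnorm_neg] using gnorm_add_le a (-b)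

lemma gnorm_natCast_smul_le (k : ℕ) (g : Fin n → ℤ) : gnorm ((k : ℤ) • g) ≤ k * gnorm g :=
  gnorm_le_iff.2 fun i => by
    simpa [Int.natAbs_mul] using Nat.mul_le_mul_left k (natAbs_le_gnorm g i)

noncomputable def supBall (n r : ℕ) : Finset (Fin n → ℤ) :=
  Fintype.piFinset fun _ => Icc (-(r : ℤ)) r

lemma mem_supBall {r : ℕ} {g : Fin n → ℤ} : g ∈ supBall n r ↔ gnorm g ≤ r := by
  simp only [supBall, Fintype.mem_piFinset, mem_Icc, gnorm_le_iff]
  exact forall_congr' fun i => by omega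

lemma zero_mem_supBall (r : ℕ) : (0 : Fin n → ℤ) ∈ supBall n r :=
  mem_supBall.2 (by simp [gnorm])

lemma neg_mem_supBall {r : ℕ} {g : Fin n → ℤ} (hg : g ∈ supBall n r) : -g ∈ supBall n r :=
  mem_supBall.2 (by rw [gnorm_neg]; exact mem_supBall.1 hg)

/-! ### Local constancy on the free part -/

def LocallyConstantOnFree {α : Type*} (f : Space n → α) : Prop :=
  ∀ x ∈ FreePart n, ∀ᶠ y in 𝓝[FreePart n] x, f y = f x

lemma eventually_forall_apply_eq (x : Space n) (W : Finset (Fin n → ℤ)) :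
    ∀ᶠ y in 𝓝 x, ∀ w ∈ W, y w = x w :=
  (eventually_all_finset W).2 fun w _ =>
    (continuous_apply w).continuousAt.eventually_mem (isOpen_discrete {x w} |>.mem_nhds rfl)

lemma eventually_shift {p : Space n → Prop} {x : Space n} (g : Fin n → ℤ)
    (h : ∀ᶠ y in 𝓝[FreePart n] shift g x, p y) : ∀ᶠ y in 𝓝[FreePart n] x, p (shift g y) :=
  ((continuous_shift g).continuousWithinAt.tendsto_nhdsWithin
    fun _ hy => shift_mem_freePart hy g).eventually h

namespace LocallyConstantOnFree

variable {α : Type*} {f : Space n → α}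

lemma comp_shift (hf : LocallyConstantOnFree f) (g : Fin n → ℤ) :
    LocallyConstantOnFree fun x => f (shift g x) := fun _ hx =>
  eventually_shift g (hf _ (shift_mem_freePart hx g))

lemma eventually_forall_shift (hf : LocallyConstantOnFree f) (B : Finset (Fin n → ℤ))
    {x : Space n} (hx : x ∈ FreePart n) :
    ∀ᶠ y in 𝓝[FreePart n] x, ∀ g ∈ B, f (shift g y) = f (shift g x) :=
  (eventually_all_finset B).2 fun g _ => hf.comp_shift g x hx

lemma isClopen {P : Space n → Prop} (hP : LocallyConstantOnFree P) :
    IsClopen {x : FreePart n | P x} := by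
  have : IsLocallyConstant fun x : FreePart n => P x :=
    (IsLocallyConstant.iff_eventually_eq _).2 fun x =>
      (eventually_nhds_subtype_iff _ x (fun y => P y = P x)).2 (hP x x.2)
  simpa using this.isClopen_fiber True

end LocallyConstantOnFree

/-! ### A locally constant proper coloring -/

abbrev Pattern (n : ℕ) := Finset ((Fin n → ℤ) × Bool)

def Matches (x : Space n) (P : Pattern n) : Prop := ∀ wb ∈ P, x wb.1 = wb.2

def IsIsolating (b : ℕ) (x : Space n) (P : Pattern n) : Prop :=
  ∀ g ∈ supBall n b, (Matches (shift g x) P ↔ g = 0)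

noncomputable def patternOf (n : ℕ) : ℕ → Pattern n := (exists_surjective_nat _).choose

lemma patternOf_surjective (n : ℕ) : Function.Surjective (patternOf n) :=
  (exists_surjective_nat _).choose_spec

noncomputable def coloring (b : ℕ) (x : Space n) : ℕ :=
  sInf {c | IsIsolating b x (patternOf n c)}

lemma exists_isIsolating (b : ℕ) {x : Space n} (hx : x ∈ FreePart n) :
    ∃ c, IsIsolating b x (patternOf n c) := by
  have : ∀ g, g ≠ 0 → ∃ w, x (g + w) ≠ x w := fun g hg => Function.ne_iff.1 (hx g hg)
  choose! wit hwit using this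
  obtain ⟨c, hc⟩ := patternOf_surjective n
    (((supBall n b).erase 0).image fun g => (wit g, x (wit g)))
  refine ⟨c, fun g hg => ⟨fun hm => by_contra fun hg0 => hwit g hg0 ?_, ?_⟩⟩
  · rw [hc] at hm
    exact hm _ (mem_image_of_mem _ (mem_erase.2 ⟨hg0, hg⟩))
  · rintro rfl
    rw [hc, shift_zero]
    intro wb hwb
    obtain ⟨g, -, rfl⟩ := mem_image.1 hwb
    rfl

lemma coloring_spec (b : ℕ) {x : Space n} (hx : x ∈ FreePart n) :
    IsIsolating b x (patternOf n (coloring b x)) :=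
  Nat.sInf_mem (exists_isIsolating b hx)

lemma coloring_shift_ne {b : ℕ} {x : Space n} (hx : x ∈ FreePart n) {g : Fin n → ℤ}
    (hg : g ≠ 0) (hgb : gnorm g ≤ b) : coloring b (shift g x) ≠ coloring b x := by
  intro he
  have h := coloring_spec b (shift_mem_freePart hx g)
  rw [he] at h
  have hm : Matches (shift g x) (patternOf n (coloring b x)) := by
    simpa [shift_zero] using (h 0 (zero_mem_supBall b)).2 rfl
  exact hg (((coloring_spec b hx) g (mem_supBall.2 hgb)).1 hm)

lemma locallyConstantOnFree_coloring (b : ℕ) : LocallyConstantOnFree (coloring (n := n) b) := by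
  intro x hx
  set c₀ := coloring b x
  let W := (range (c₀ + 1)).biUnion fun c =>
    (supBall n b).biUnion fun g => (patternOf n c).image fun wb => g + wb.1
  filter_upwards [nhdsWithin_le_nhds (eventually_forall_apply_eq x W)] with y hy
  have key : ∀ c ≤ c₀, IsIsolating b y (patternOf n c) ↔ IsIsolating b x (patternOf n c) :=
    fun c hc => forall₂_congr fun g hg => by
      refine iff_congr (forall₂_congr fun wb hwb => ?_) Iff.rfl
      rw [show shift g y wb.1 = shift g x wb.1 from hy _ <| mem_biUnion.2
        ⟨c, mem_range.2 (by omega), mem_biUnion.2 ⟨g, hg, mem_image_of_mem _ hwb⟩⟩]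
  have hy₀ : IsIsolating b y (patternOf n c₀) := (key c₀ le_rfl).2 (coloring_spec b hx)
  have hle : coloring b y ≤ c₀ := Nat.sInf_le hy₀
  exact le_antisymm hle (Nat.sInf_le ((key _ hle).1
    (Nat.sInf_mem (s := {c | IsIsolating b y (patternOf n c)}) ⟨c₀, hy₀⟩)))

/-! ### Greedy selection by priority -/

def Greedy (r : Space n → ℕ) (σ : Space n → Prop) (B : Finset (Fin n → ℤ)) (x : Space n) :
    Prop :=
  σ x ∧ ∀ g ∈ B, ∀ _ : r (shift g x) < r x, ¬ Greedy r σ B (shift g x)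
termination_by r x

section GreedySelection

variable {r : Space n → ℕ} {σ : Space n → Prop} {B : Finset (Fin n → ℤ)}

lemma greedy_iff {x : Space n} :
    Greedy r σ B x ↔ σ x ∧ ∀ g ∈ B, r (shift g x) < r x → ¬ Greedy r σ B (shift g x) := by
  rw [Greedy]

lemma exists_greedy_shift (h0 : 0 ∈ B) {x : Space n} (hσ : σ x) :
    ∃ g ∈ B, Greedy r σ B (shift g x) := by
  by_cases h : Greedy r σ B x
  · exact ⟨0, h0, by rwa [shift_zero]⟩
  · obtain ⟨g, hg, -, hgx⟩ : ∃ g ∈ B, r (shift g x) < r x ∧ Greedy r σ B (shift g x) := by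
      by_contra! h'
      exact h (greedy_iff.2 ⟨hσ, h'⟩)
    exact ⟨g, hg, hgx⟩

lemma priority_eq_of_greedy (hB : ∀ g ∈ B, -g ∈ B) {x : Space n} {g : Fin n → ℤ} (hg : g ∈ B)
    (hx : Greedy r σ B x) (hgx : Greedy r σ B (shift g x)) : r (shift g x) = r x := by
  rcases lt_trichotomy (r (shift g x)) (r x) with hlt | heq | hgt
  · exact absurd hgx ((greedy_iff.1 hx).2 g hg hlt)
  · exact heq
  · have h := (greedy_iff.1 hgx).2 (-g) (hB g hg)
    rw [shift_neg_shift] at h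
    exact absurd hx (h hgt)

lemma locallyConstantOnFree_greedy (hr : LocallyConstantOnFree r)
    (hσ : LocallyConstantOnFree σ) : LocallyConstantOnFree (Greedy r σ B) := by
  intro x hx
  induction hk : r x using Nat.strong_induction_on generalizing x with
  | _ k ih =>
  let B' := B.filter fun g => r (shift g x) < k
  have hB' : ∀ g ∈ B', ∀ᶠ y in 𝓝[FreePart n] x,
      Greedy r σ B (shift g y) = Greedy r σ B (shift g x) := fun g hg =>
    eventually_shift g (ih _ (mem_filter.1 hg).2 _ (shift_mem_freePart hx g) rfl)
  filter_upwards [hr x hx, hσ x hx, hr.eventually_forall_shift B hx,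
    (eventually_all_finset B').2 hB'] with y hry hσy hrg hgreedy
  refine propext ?_
  rw [greedy_iff, greedy_iff, hσy, hry]
  refine and_congr_right' (forall₂_congr fun g hg => ?_)
  rw [hrg g hg]
  by_cases hlt : r (shift g x) < r x
  · rw [hgreedy g (mem_filter.2 ⟨hg, hk ▸ hlt⟩)]
  · simp only [hlt, false_implies]

end GreedySelection

/-! ### The weighted norm and `T`-adic values -/

def wnorm (T : ℕ) (g : Fin n → ℤ) : ℕ := ∑ i : Fin n, T ^ (i : ℕ) * (g i).natAbs

def adicValue (T : ℕ) : (Fin n → ℤ) →+ ℤ where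
  toFun g := ∑ i : Fin n, g i * T ^ (i : ℕ)
  map_zero' := by simp
  map_add' a b := by simp [add_mul, sum_add_distrib]

lemma adicValue_apply (T : ℕ) (g : Fin n → ℤ) : adicValue T g = ∑ i, g i * T ^ (i : ℕ) := rfl

section WeightedNorm

variable {T : ℕ}

lemma wnorm_neg (g : Fin n → ℤ) : wnorm T (-g) = wnorm T g := by
  simp [wnorm]

lemma wnorm_sub_comm (a b : Fin n → ℤ) : wnorm T (a - b) = wnorm T (b - a) := by
  rw [← neg_sub, wnorm_neg]

lemma wnorm_add_le (a b : Fin n → ℤ) : wnorm T (a + b) ≤ wnorm T a + wnorm T b := by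
  rw [wnorm, wnorm, wnorm, ← sum_add_distrib]
  gcongr with i
  rw [← mul_add]
  exact Nat.mul_le_mul_left _ (Int.natAbs_add_le _ _)

lemma wnorm_le_mul_gnorm (g : Fin n → ℤ) : wnorm T g ≤ wnorm T (1 : Fin n → ℤ) * gnorm g := by
  rw [wnorm, wnorm, sum_mul]
  refine sum_le_sum fun i _ => ?_
  simpa using Nat.mul_le_mul_left (T ^ (i : ℕ)) (natAbs_le_gnorm g i)

lemma gnorm_le_wnorm (hT : 0 < T) (g : Fin n → ℤ) : gnorm g ≤ wnorm T g :=
  gnorm_le_iff.2 fun i => (Nat.le_mul_of_pos_left _ (pow_pos hT _)).trans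
    (single_le_sum (f := fun j : Fin n => T ^ (j : ℕ) * (g j).natAbs) (by simp) (mem_univ i))

lemma abs_adicValue_le (g : Fin n → ℤ) : |adicValue T g| ≤ wnorm T g := by
  rw [adicValue_apply, wnorm]
  push_cast
  refine (abs_sum_le_sum_abs _ _).trans (le_of_eq (sum_congr rfl fun i _ => ?_))
  rw [abs_mul, abs_of_nonneg (by positivity : (0 : ℤ) ≤ (T : ℤ) ^ (i : ℕ)), mul_comm]

lemma eq_zero_of_adicValue_eq_zero {g : Fin n → ℤ} (hg : ∀ i, (g i).natAbs < T)
    (h : adicValue T g = 0) : g = 0 := by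
  induction n with
  | zero => exact Subsingleton.elim _ _
  | succ n ih =>
    rw [adicValue_apply, Fin.sum_univ_succ] at h
    have hsum : g 0 + T * adicValue T (fun i => g i.succ) = 0 := by
      rw [← h, adicValue_apply, mul_sum]
      congr 1
      · simp
      · refine sum_congr rfl fun i _ => ?_
        rw [Fin.val_succ, pow_succ]
        ring
    have h0 : g 0 = 0 := Int.eq_zero_of_abs_lt_dvd (m := T)
      ⟨-adicValue T (fun i => g i.succ), by linarith⟩
      (by rw [Int.abs_eq_natAbs]; exact_mod_cast hg 0)
    have htail : (fun i : Fin n => g i.succ) = 0 := ih (fun i => hg i.succ) <| by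
      rw [h0, zero_add] at hsum
      exact (mul_eq_zero.1 hsum).resolve_left (by have := hg 0; omega)
    funext i
    refine Fin.cases h0 (fun j => congrFun htail j) i

end WeightedNorm

noncomputable def adicChar (T p : ℕ) : (Fin n → ℤ) →+ ZMod p :=
  (Int.castAddHom (ZMod p)).comp (adicValue T)

lemma eq_zero_of_adicChar_eq_zero {T p : ℕ} {g : Fin n → ℤ} (hT : gnorm g < T)
    (hp : wnorm T g < p) (h : adicChar T p g = 0) : g = 0 := by
  have hdvd : (p : ℤ) ∣ adicValue T g := (ZMod.intCast_zmod_eq_zero_iff_dvd _ _).1 h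
  refine eq_zero_of_adicValue_eq_zero (fun i => (natAbs_le_gnorm g i).trans_lt hT)
    (Int.eq_zero_of_abs_lt_dvd hdvd ?_)
  exact (abs_adicValue_le g).trans_lt (by exact_mod_cast hp)

lemma ZMod.exists_lt_nsmul_eq {p : ℕ} [Fact p.Prime] {z : ZMod p} (hz : z ≠ 0) (t : ZMod p) :
    ∃ a < p, t = a • z := by
  refine ⟨(t * z⁻¹).val, ZMod.val_lt _, ?_⟩
  rw [nsmul_eq_mul, ZMod.natCast_val, ZMod.cast_id, mul_assoc, inv_mul_cancel₀ hz, mul_one]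

/-! ### Lines crossing shells of the weighted norm -/

lemma card_le_of_fiber_gaps {F : Finset ℕ} {φ : ℕ → ℕ} {N L : ℕ} (hφ : ∀ k ∈ F, φ k ≤ N)
    (hgap : ∀ k ∈ F, ∀ k' ∈ F, k ≤ k' → φ k = φ k' → k' ≤ k + L) :
    #F ≤ (N + 1) * (L + 1) := by
  have hfiber : ∀ j, #(F.filter (φ · = j)) ≤ L + 1 := by
    intro j
    set G := F.filter (φ · = j)
    rcases G.eq_empty_or_nonempty with hG | hG
    · simp [hG]
    · have hIcc : G ⊆ Icc (G.min' hG) (G.min' hG + L) := fun k hk => by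
        have ha := mem_filter.1 (G.min'_mem hG)
        have hk' := mem_filter.1 hk
        exact mem_Icc.2 ⟨G.min'_le k hk,
          hgap _ ha.1 _ hk'.1 (G.min'_le k hk) (ha.2.trans hk'.2.symm)⟩
      exact (card_le_card hIcc).trans (by simp; omega)
  have hsub : F ⊆ (range (N + 1)).biUnion fun j => F.filter (φ · = j) := fun k hk =>
    mem_biUnion.2 ⟨φ k, mem_range.2 (Nat.lt_succ_of_le (hφ k hk)), mem_filter.2 ⟨hk, rfl⟩⟩
  calc #F ≤ #((range (N + 1)).biUnion fun j => F.filter (φ · = j)) := card_le_card hsub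
    _ ≤ #(range (N + 1)) * (L + 1) := card_biUnion_le_card_mul _ _ _ fun j _ => hfiber j
    _ = (N + 1) * (L + 1) := by rw [card_range]

lemma sub_mul_nonneg_iff_of_between {a b k k' k'' : ℤ} (h₁ : k ≤ k') (h₂ : k' ≤ k'')
    (h : 0 ≤ a - k * b ↔ 0 ≤ a - k'' * b) : (0 ≤ a - k' * b ↔ 0 ≤ a - k * b) := by
  rcases le_total 0 b with hb | hb
  · have m₁ := mul_le_mul_of_nonneg_right h₁ hb
    have m₂ := mul_le_mul_of_nonneg_right h₂ hb
    exact ⟨fun _ => by linarith, fun h0 => by linarith [h.1 h0]⟩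
  · have m₁ := mul_le_mul_of_nonpos_right h₁ hb
    have m₂ := mul_le_mul_of_nonpos_right h₂ hb
    exact ⟨fun h0 => by_contra fun hk => hk (h.2 (by linarith)), fun _ => by linarith⟩

def signFlips (v s : Fin n → ℤ) (k : ℕ) : Finset (Fin n) :=
  univ.filter fun i => ¬(0 ≤ v i - k * s i ↔ 0 ≤ v i)

lemma signFlips_mono (v s : Fin n → ℤ) : Monotone (signFlips v s) := by
  intro k k' hk i hi
  simp only [signFlips, mem_filter, mem_univ, true_and] at hi ⊢
  refine fun h' => hi ?_
  simpa using sub_mul_nonneg_iff_of_between (a := v i) (b := s i) (Nat.cast_nonneg k)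
    (Nat.cast_le.2 hk) (by simpa using h'.symm)

/-- Along a segment on which no coordinate changes sign, `k ↦ wnorm T (v - k • s)` is affine
with a nonzero integer slope: the slope is a `T`-adic number with digits `± s i`. -/
lemma abs_sub_le_abs_wnorm_sub {T : ℕ} {v s : Fin n → ℤ} (hsT : gnorm s < T) (hs : s ≠ 0)
    {k k' : ℤ} (hsign : ∀ i, (0 ≤ v i - k * s i ↔ 0 ≤ v i - k' * s i)) :
    |k' - k| ≤ |(wnorm T (v - k • s) : ℤ) - wnorm T (v - k' • s)| := by
  let ε : Fin n → ℤ := fun i => if 0 ≤ v i - k * s i then 1 else -1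
  have hval : ∀ j : ℤ, (∀ i, (0 ≤ v i - j * s i ↔ 0 ≤ v i - k * s i)) →
      (wnorm T (v - j • s) : ℤ) = adicValue T (ε * v) - j * adicValue T (ε * s) := by
    intro j hj
    rw [show j * adicValue T (ε * s) = adicValue T (j • (ε * s)) by rw [map_zsmul, smul_eq_mul],
      ← map_sub, adicValue_apply, wnorm]
    push_cast
    refine sum_congr rfl fun i _ => ?_
    simp only [Pi.sub_apply, Pi.mul_apply, Pi.smul_apply, smul_eq_mul]
    by_cases h : 0 ≤ v i - k * s i
    · rw [abs_of_nonneg ((hj i).2 h)]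
      simp only [ε, if_pos h]
      ring
    · rw [abs_of_neg (not_le.1 (mt (hj i).1 h))]
      simp only [ε, if_neg h]
      ring
  have hε : ∀ i, (ε i * s i).natAbs = (s i).natAbs := fun i => by
    simp only [ε]
    split_ifs <;> simp
  have hslope : adicValue T (ε * s) ≠ 0 := fun h => hs <| funext fun i => by
    have h0 : ε i * s i = 0 := congrFun (eq_zero_of_adicValue_eq_zero
      (fun i => (hε i).trans_lt ((natAbs_le_gnorm s i).trans_lt hsT)) h) i
    simpa [h0, eq_comm] using hε i
  rw [hval k fun _ => Iff.rfl, hval k' fun i => (hsign i).symm]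
  calc |k' - k| = |k' - k| * 1 := (mul_one _).symm
    _ ≤ |k' - k| * |adicValue T (ε * s)| := by gcongr; exact Int.one_le_abs hslope
    _ = _ := by rw [← abs_mul]; congr 1; ring

/-- The line crosses at most `n` coordinate hyperplanes, and between two crossings the norm is
strictly monotone. -/
lemma card_shell_crossings_le {T : ℕ} {s : Fin n → ℤ} (hsT : gnorm s < T) (hs : s ≠ 0)
    (v : Fin n → ℤ) (A W K : ℕ) :
    #((range K).filter fun k : ℕ =>
        A < wnorm T (v - (k : ℤ) • s) ∧ wnorm T (v - (k : ℤ) • s) ≤ A + W) ≤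
      (n + 1) * (W + 1) := by
  refine card_le_of_fiber_gaps (N := n) (φ := fun k => #(signFlips v s k))
    (fun k _ => (card_le_univ _).trans (by simp)) fun k hk k' hk' hkk' hφ => ?_
  have hsame : signFlips v s k = signFlips v s k' :=
    eq_of_subset_of_card_le (signFlips_mono v s hkk') hφ.symm.le
  have hsign : ∀ i, (0 ≤ v i - (k : ℤ) * s i ↔ 0 ≤ v i - (k' : ℤ) * s i) := fun i => by
    have := congrArg (i ∈ ·) hsame
    simp only [signFlips, mem_filter, mem_univ, true_and, eq_iff_iff] at this
    tauto
  have hk'k := abs_sub_le_abs_wnorm_sub hsT hs hsign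
  simp only [mem_filter] at hk hk'
  have hlt : |(wnorm T (v - (k : ℤ) • s) : ℤ) - wnorm T (v - (k' : ℤ) • s)| < W :=
    abs_sub_lt_iff.2 ⟨by omega, by omega⟩
  have := (le_abs_self _).trans (hk'k.trans hlt.le)
  omega

lemma card_le_of_separated {S : Finset (Fin n → ℤ)} {ρ q : ℕ} (hq : 0 < q)
    (hS : S ⊆ supBall n ρ) (hsep : ∀ v ∈ S, ∀ v' ∈ S, v ≠ v' → q ≤ gnorm (v - v')) :
    #S ≤ (2 * ρ / q + 1) ^ n := by
  have hq' : (0 : ℤ) < q := by exact_mod_cast hq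
  let φ : (Fin n → ℤ) → Fin n → ℤ := fun v i => (v i + ρ) / q
  have hφ : ∀ v ∈ S, φ v ∈ Fintype.piFinset fun _ => Icc (0 : ℤ) ((2 * ρ / q : ℕ) : ℤ) := by
    intro v hv
    refine Fintype.mem_piFinset.2 fun i => mem_Icc.2 ⟨Int.ediv_nonneg ?_ hq'.le, ?_⟩
    all_goals have := (natAbs_le_gnorm v i).trans (mem_supBall.1 (hS hv))
    · omega
    · rw [Int.natCast_ediv]
      exact Int.ediv_le_ediv hq' (by push_cast; omega)
  have hinj : Set.InjOn φ S := by
    intro v hv v' hv' he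
    by_contra hne
    have hclose : gnorm (v - v') ≤ q - 1 := gnorm_le_iff.2 fun i => by
      have hi := congrFun he i
      have e₁ := Int.emod_add_mul_ediv (v i + ρ) q
      have e₂ := Int.emod_add_mul_ediv (v' i + ρ) q
      have := Int.emod_nonneg (v i + ρ) hq'.ne'
      have := Int.emod_nonneg (v' i + ρ) hq'.ne'
      have := Int.emod_lt_of_pos (v i + ρ) hq'
      have := Int.emod_lt_of_pos (v' i + ρ) hq'
      simp only [φ] at hi
      rw [hi] at e₁
      rw [Pi.sub_apply]
      omega
    have := hsep v hv v' hv' hne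
    omega
  calc #S ≤ #(Fintype.piFinset fun _ => Icc (0 : ℤ) ((2 * ρ / q : ℕ) : ℤ)) :=
        card_le_card_of_injOn φ hφ hinj
    _ = (2 * ρ / q + 1) ^ n := by simp only [Fintype.card_piFinset, Int.card_Icc, prod_const,
        card_univ, Fintype.card_fin, sub_zero]; rfl

/-! ### Markers, owners and kept points -/

noncomputable def wnormBall (n T Q : ℕ) : Finset (Fin n → ℤ) :=
  (supBall n Q).filter fun g => wnorm T g ≤ Q

lemma mem_wnormBall {T Q : ℕ} (hT : 0 < T) {g : Fin n → ℤ} :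
    g ∈ wnormBall n T Q ↔ wnorm T g ≤ Q := by
  simp only [wnormBall, mem_filter, mem_supBall, and_iff_right_iff_imp]
  exact (gnorm_le_wnorm hT g).trans

lemma gnorm_le_of_mem_wnormBall {T Q : ℕ} {g : Fin n → ℤ} (hg : g ∈ wnormBall n T Q) :
    gnorm g ≤ Q :=
  mem_supBall.1 (mem_filter.1 hg).1

lemma neg_mem_wnormBall {T Q : ℕ} {g : Fin n → ℤ} (hg : g ∈ wnormBall n T Q) :
    -g ∈ wnormBall n T Q :=
  mem_filter.2 ⟨neg_mem_supBall (mem_filter.1 hg).1, by rw [wnorm_neg]; exact (mem_filter.1 hg).2⟩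

lemma zero_mem_wnormBall (T Q : ℕ) : (0 : Fin n → ℤ) ∈ wnormBall n T Q :=
  mem_filter.2 ⟨zero_mem_supBall Q, by simp [wnorm]⟩

def IsMarker (T Q R : ℕ) : Space n → Prop :=
  Greedy (coloring R) (fun _ => True) (wnormBall n T Q)

open Classical in
noncomputable def candidates (T Q R : ℕ) (x : Space n) : Finset (Fin n → ℤ) :=
  (wnormBall n T Q).filter fun g => IsMarker T Q R (shift g x)

section Markers

variable {T Q R : ℕ}

lemma locallyConstantOnFree_isMarker : LocallyConstantOnFree (IsMarker (n := n) T Q R) :=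
  locallyConstantOnFree_greedy (locallyConstantOnFree_coloring R) fun _ _ => by simp

lemma mem_candidates {x : Space n} {g : Fin n → ℤ} :
    g ∈ candidates T Q R x ↔ g ∈ wnormBall n T Q ∧ IsMarker T Q R (shift g x) := by
  classical
  simp only [candidates, mem_filter]

lemma candidates_nonempty (x : Space n) : (candidates T Q R x).Nonempty := by
  obtain ⟨g, hg, hgx⟩ := exists_greedy_shift (r := coloring R) (σ := fun _ => True)
    (zero_mem_wnormBall T Q) (x := x) trivial
  exact ⟨g, mem_candidates.2 ⟨hg, hgx⟩⟩

lemma lt_wnorm_of_isMarker (hT : 0 < T) (hQR : Q ≤ R) {x : Space n} (hx : x ∈ FreePart n)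
    {v v' : Fin n → ℤ} (hv : IsMarker T Q R (shift v x)) (hv' : IsMarker T Q R (shift v' x))
    (hne : v ≠ v') : Q < wnorm T (v' - v) := by
  by_contra! h
  have hg := (mem_wnormBall hT).2 h
  have heq := priority_eq_of_greedy (fun _ => neg_mem_wnormBall) hg hv (by
    rwa [shift_shift, add_sub_cancel])
  refine coloring_shift_ne (shift_mem_freePart hx v) (sub_ne_zero.2 hne.symm)
    ((gnorm_le_of_mem_wnormBall hg).trans hQR) heq

end Markers

noncomputable def owner (T Q R : ℕ) (x : Space n) : Fin n → ℤ :=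
  (exists_min_image (candidates T Q R x) (fun g => coloring R (shift g x))
    (candidates_nonempty x)).choose

noncomputable def ownerColor (T Q R : ℕ) (x : Space n) : ℕ :=
  coloring R (shift (owner T Q R x) x)

lemma owner_mem_candidates (T Q R : ℕ) (x : Space n) : owner T Q R x ∈ candidates T Q R x :=
  (exists_min_image _ _ (candidates_nonempty x)).choose_spec.1

lemma gnorm_owner_le (T Q R : ℕ) (x : Space n) : gnorm (owner T Q R x) ≤ Q :=
  gnorm_le_of_mem_wnormBall (mem_candidates.1 (owner_mem_candidates T Q R x)).1

section Owners

variable {T Q R : ℕ}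

lemma ownerColor_le {x : Space n} {g : Fin n → ℤ} (hg : g ∈ candidates T Q R x) :
    ownerColor T Q R x ≤ coloring R (shift g x) :=
  (exists_min_image (candidates T Q R x) (fun g => coloring R (shift g x))
    (candidates_nonempty x)).choose_spec.2 g hg

lemma owner_eq_of_forall_le (h2QR : 2 * Q ≤ R) {x : Space n} (hx : x ∈ FreePart n)
    {g : Fin n → ℤ} (hg : g ∈ candidates T Q R x)
    (hmin : ∀ g' ∈ candidates T Q R x, coloring R (shift g x) ≤ coloring R (shift g' x)) :
    owner T Q R x = g := by
  have ho := owner_mem_candidates T Q R x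
  by_contra hne
  have hnorm : gnorm (g - owner T Q R x) ≤ R := (gnorm_sub_le _ _).trans <| by
    have := gnorm_le_of_mem_wnormBall (mem_candidates.1 hg).1
    have := gnorm_owner_le T Q R x
    omega
  refine coloring_shift_ne (shift_mem_freePart hx (owner T Q R x)) (sub_ne_zero.2 (Ne.symm hne))
    hnorm ?_
  rw [shift_shift, add_sub_cancel]
  exact le_antisymm (hmin _ ho) (ownerColor_le hg)

lemma locallyConstantOnFree_owner (h2QR : 2 * Q ≤ R) :
    LocallyConstantOnFree (owner (n := n) T Q R) := by
  intro x hx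
  filter_upwards [locallyConstantOnFree_isMarker.eventually_forall_shift (wnormBall n T Q) hx,
    (locallyConstantOnFree_coloring R).eventually_forall_shift (wnormBall n T Q) hx,
    self_mem_nhdsWithin] with y hmarker hcolor hy
  have hcand : candidates T Q R y = candidates T Q R x := by
    ext g
    simp only [mem_candidates]
    exact and_congr_right fun hg => by rw [hmarker g hg]
  have ho := owner_mem_candidates T Q R x
  rw [← hcand] at ho
  refine owner_eq_of_forall_le h2QR hy ho fun g' hg' => ?_
  rw [hcolor _ (mem_candidates.1 ho).1, hcolor _ (mem_candidates.1 hg').1]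
  exact ownerColor_le (hcand ▸ hg')

lemma locallyConstantOnFree_ownerColor (h2QR : 2 * Q ≤ R) :
    LocallyConstantOnFree (ownerColor (n := n) T Q R) := fun x hx => by
  filter_upwards [locallyConstantOnFree_owner h2QR x hx,
    (locallyConstantOnFree_coloring R).comp_shift (owner T Q R x) x hx] with y howner hcolor
  rw [ownerColor, howner, hcolor, ownerColor]

end Owners

def IsKept {G : Type*} [AddGroup G] (T Q R : ℕ) (ψ : (Fin n → ℤ) →+ G) (d : ℕ) :
    Space n → Prop :=
  Greedy (ownerColor T Q R) (fun z => ψ (owner T Q R z) = 0) (supBall n d)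

section Kept

variable {T Q R d : ℕ} {G : Type*} [AddGroup G] {ψ : (Fin n → ℤ) →+ G}

lemma locallyConstantOnFree_isKept (h2QR : 2 * Q ≤ R) :
    LocallyConstantOnFree (IsKept (n := n) T Q R ψ d) :=
  locallyConstantOnFree_greedy (locallyConstantOnFree_ownerColor h2QR) fun x hx => by
    filter_upwards [locallyConstantOnFree_owner h2QR x hx] with y hy
    rw [hy]

/-- Two kept points with a common owner differ by an element of `ker ψ`; otherwise their owners
have distinct colors, which the greedy choice forbids. -/
lemma eq_zero_of_isKept (hψ : ∀ g, gnorm g ≤ d → ψ g = 0 → g = 0) (hR : 2 * Q + d ≤ R)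
    {x : Space n} (hx : x ∈ FreePart n) {g : Fin n → ℤ} (hgd : gnorm g ≤ d)
    (h₁ : IsKept T Q R ψ d x) (h₂ : IsKept T Q R ψ d (shift g x)) : g = 0 := by
  have hn₁ := gnorm_owner_le T Q R x
  have hn₂ := gnorm_owner_le T Q R (shift g x)
  set o₁ := owner T Q R x
  set o₂ := owner T Q R (shift g x)
  by_cases hsame : g + o₂ = o₁
  · refine hψ g hgd ?_
    rw [show g = o₁ - o₂ by rw [← hsame, add_sub_cancel_right], map_sub, (greedy_iff.1 h₁).1,
      (greedy_iff.1 h₂).1, sub_zero]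
  · have heq := priority_eq_of_greedy (fun _ => neg_mem_supBall) (mem_supBall.2 hgd) h₁ h₂
    have hnorm : gnorm (g + o₂ - o₁) ≤ R := by
      have := gnorm_add_le g o₂
      have := gnorm_sub_le (g + o₂) o₁
      omega
    refine absurd ?_ (coloring_shift_ne (shift_mem_freePart hx o₁) (sub_ne_zero.2 hsame) hnorm)
    rw [shift_shift, add_sub_cancel]
    simpa only [ownerColor, shift_shift] using heq

/-! ### Deep points -/

open Classical in
lemma card_filter_isMarker_le {T Q R : ℕ} (hT : 0 < T) (hQR : Q ≤ R) {x : Space n}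
    (hx : x ∈ FreePart n) {q : ℕ} (hq : wnorm T (1 : Fin n → ℤ) * q ≤ Q) (ρ : ℕ) :
    #((supBall n ρ).filter fun v => IsMarker T Q R (shift v x)) ≤ (2 * ρ / (q + 1) + 1) ^ n := by
  refine card_le_of_separated q.succ_pos (filter_subset _ _) fun v hv v' hv' hne => ?_
  by_contra! h
  have := lt_wnorm_of_isMarker hT hQR hx (mem_filter.1 hv').2 (mem_filter.1 hv).2 hne.symm
  have := wnorm_le_mul_gnorm (T := T) (v - v')
  have := Nat.mul_le_mul_left (wnorm T (1 : Fin n → ℤ)) (Nat.le_of_lt_succ h)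
  omega

def IsDeep (T Q R E : ℕ) (x : Space n) (u w : Fin n → ℤ) : Prop :=
  IsMarker T Q R (shift w x) ∧ wnorm T (w - u) + E ≤ Q ∧
    ∀ v, IsMarker T Q R (shift v x) → wnorm T (v - u) ≤ Q + E →
      coloring R (shift w x) ≤ coloring R (shift v x)

section Deep

variable {T Q R E : ℕ}

lemma owner_shift_of_isDeep (hT : 0 < T) (h2QR : 2 * Q ≤ R) {x : Space n} (hx : x ∈ FreePart n)
    {u w z : Fin n → ℤ} (hd : IsDeep T Q R E x u w) (hz : wnorm T (z - u) ≤ E) :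
    owner T Q R (shift z x) = w - z ∧ ownerColor T Q R (shift z x) = coloring R (shift w x) := by
  obtain ⟨hw, hwu, hmin⟩ := hd
  have hshift : shift (w - z) (shift z x) = shift w x := by rw [shift_shift, add_sub_cancel]
  have hown : owner T Q R (shift z x) = w - z := by
    refine owner_eq_of_forall_le h2QR (shift_mem_freePart hx z)
      (mem_candidates.2 ⟨(mem_wnormBall hT).2 ?_, hshift ▸ hw⟩) fun g hg => ?_
    · calc wnorm T (w - z) = wnorm T ((w - u) + (u - z)) := by rw [sub_add_sub_cancel]
        _ ≤ wnorm T (w - u) + wnorm T (u - z) := wnorm_add_le _ _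
        _ ≤ Q := by rw [wnorm_sub_comm u z]; omega
    · obtain ⟨hg, hgm⟩ := mem_candidates.1 hg
      rw [shift_shift] at hgm
      rw [hshift, shift_shift]
      refine hmin _ hgm ?_
      calc wnorm T (z + g - u) = wnorm T (g + (z - u)) := by congr 1; abel
        _ ≤ wnorm T g + wnorm T (z - u) := wnorm_add_le _ _
        _ ≤ Q + E := add_le_add ((mem_wnormBall hT).1 hg) hz
  exact ⟨hown, by rw [ownerColor, hown, hshift]⟩

lemma isKept_shift_of_isDeep {G : Type*} [AddGroup G] {ψ : (Fin n → ℤ) →+ G} {d : ℕ}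
    (hT : 0 < T) (h2QR : 2 * Q ≤ R) {x : Space n} (hx : x ∈ FreePart n) {u w z : Fin n → ℤ}
    (hd : IsDeep T Q R E x u w) (hz : wnorm T (z - u) + wnorm T (1 : Fin n → ℤ) * d ≤ E)
    (hψ : ψ (w - z) = 0) : IsKept T Q R ψ d (shift z x) := by
  have hcolor : ∀ g ∈ supBall n d,
      ownerColor T Q R (shift g (shift z x)) = coloring R (shift w x) := fun g hg => by
    rw [shift_shift]
    refine (owner_shift_of_isDeep hT h2QR hx hd ?_).2
    calc wnorm T (z + g - u) = wnorm T ((z - u) + g) := by congr 1; abel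
      _ ≤ wnorm T (z - u) + wnorm T (1 : Fin n → ℤ) * gnorm g :=
        (wnorm_add_le _ _).trans (Nat.add_le_add_left (wnorm_le_mul_gnorm g) _)
      _ ≤ E := le_trans (Nat.add_le_add_left (Nat.mul_le_mul_left _ (mem_supBall.1 hg)) _) hz
  rw [IsKept, greedy_iff, (owner_shift_of_isDeep hT h2QR hx hd (by omega)).1]
  refine ⟨hψ, fun g hg hlt => absurd hlt ?_⟩
  rw [hcolor g hg, ← hcolor 0 (zero_mem_supBall d), shift_zero]
  exact lt_irrefl _

lemma isDeep_or_exists_shell (hT : 0 < T) (x : Space n) (u : Fin n → ℤ) :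
    (∃ w, IsDeep T Q R E x u w) ∨
      ∃ v, IsMarker T Q R (shift v x) ∧ Q < wnorm T (v - u) + E ∧ wnorm T (v - u) ≤ Q + E := by
  classical
  let V := (wnormBall n T (Q + E)).filter fun t => IsMarker T Q R (shift (u + t) x)
  have hV : V.Nonempty := by
    obtain ⟨g, hg⟩ := candidates_nonempty (T := T) (Q := Q) (R := R) (shift u x)
    obtain ⟨hgQ, hgm⟩ := mem_candidates.1 hg
    refine ⟨g, mem_filter.2 ⟨(mem_wnormBall hT).2 ?_, by rwa [shift_shift] at hgm⟩⟩
    exact ((mem_wnormBall hT).1 hgQ).trans (Nat.le_add_right Q E)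
  obtain ⟨t, ht, hmin⟩ := exists_min_image V (fun t => coloring R (shift (u + t) x)) hV
  obtain ⟨htQ, htm⟩ := mem_filter.1 ht
  have htu : u + t - u = t := add_sub_cancel_left u t
  by_cases hdeep : wnorm T t + E ≤ Q
  · refine Or.inl ⟨u + t, htm, by rw [htu]; exact hdeep, fun v hv hvu => ?_⟩
    have := hmin (v - u) (mem_filter.2 ⟨(mem_wnormBall hT).2 hvu, by rwa [add_sub_cancel]⟩)
    rwa [add_sub_cancel] at this
  · exact Or.inr ⟨u + t, htm, by rw [htu]; omega, by rw [htu]; exact (mem_wnormBall hT).1 htQ⟩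

open Classical in
/-- If none of the first `K + 1` points of the line `k ↦ k • s` is deep, each of them lies in a
shell around one of the markers near the line. -/
lemma succ_le_card_mul_of_forall_not_isDeep {x : Space n} {s : Fin n → ℤ} (hs : s ≠ 0) {m : ℕ}
    (hsm : gnorm s ≤ m) (hmT : m < T) (hEQ : E ≤ Q) {K : ℕ}
    (hno : ∀ k ≤ K, ∀ w, ¬IsDeep T Q R E x ((k : ℤ) • s) w) :
    K + 1 ≤ #((supBall n (K * m + Q + E)).filter fun v => IsMarker T Q R (shift v x)) *
      ((n + 1) * (2 * E + 1)) := by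
  have hT : 0 < T := by omega
  have hshell : ∀ k : ℕ, ∃ v, k ≤ K → IsMarker T Q R (shift v x) ∧
      Q < wnorm T (v - (k : ℤ) • s) + E ∧ wnorm T (v - (k : ℤ) • s) ≤ Q + E := fun k => by
    by_cases hk : k ≤ K
    · obtain ⟨v, hv⟩ := (isDeep_or_exists_shell hT x _).resolve_left (not_exists.2 (hno k hk))
      exact ⟨v, fun _ => hv⟩
    · exact ⟨0, fun h => absurd h hk⟩
  choose v hv using hshell
  let crossings : (Fin n → ℤ) → Finset ℕ := fun v => (range (K + 1)).filter fun k =>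
    Q - E < wnorm T (v - (k : ℤ) • s) ∧ wnorm T (v - (k : ℤ) • s) ≤ Q - E + 2 * E
  have hcover : range (K + 1) ⊆ ((supBall n (K * m + Q + E)).filter fun v =>
      IsMarker T Q R (shift v x)).biUnion crossings := by
    intro k hk
    have hkK := Nat.lt_succ_iff.1 (mem_range.1 hk)
    obtain ⟨hvm, hv₁, hv₂⟩ := hv k hkK
    refine mem_biUnion.2 ⟨v k, mem_filter.2 ⟨mem_supBall.2 ?_, hvm⟩,
      mem_filter.2 ⟨hk, by omega, by omega⟩⟩
    calc gnorm (v k) = gnorm ((v k - (k : ℤ) • s) + (k : ℤ) • s) := by rw [sub_add_cancel]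
      _ ≤ gnorm (v k - (k : ℤ) • s) + gnorm ((k : ℤ) • s) := gnorm_add_le _ _
      _ ≤ (Q + E) + K * m := add_le_add ((gnorm_le_wnorm hT _).trans hv₂)
          ((gnorm_natCast_smul_le k s).trans (Nat.mul_le_mul hkK hsm))
      _ = K * m + Q + E := by ring
  have hcard := (card_le_card hcover).trans (card_biUnion_le_card_mul _ _ _
    fun v _ => card_shell_crossings_le (hsm.trans_lt hmT) hs v (Q - E) (2 * E) (K + 1))
  rwa [card_range] at hcard

end Deep

/-! ### The construction -/

section Construction

variable (n d m : ℕ)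

/- Where the constants come from. `radix` exceeds every coordinate, and `charPrime` every weighted
norm, of the vectors fed to `adicChar`, so it has no small nonzero kernel elements. `slack` bounds
the weighted norm of `a • s + g` for `a < charPrime` and `gnorm g ≤ d`: how far a kept point may
sit from a deep point. A line crosses the shell of a marker at most `crossingBound` times, and at
most `markerBound` markers lie near its first `markerBound * crossingBound + 1` points, so one of
these is deep; fewer than `charPrime` further steps reach the right coset of `ker adicChar`.
Markers are `separation`-separated in the sup norm, and `separation ≥ lineLength * m` keeps
`markerBound` independent of `lineLength`. -/

def radix : ℕ := d + m + 1

def weight : ℕ := wnorm (radix d m) (1 : Fin n → ℤ)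

noncomputable def charPrime : ℕ :=
  (Nat.exists_infinite_primes (weight n d m * (d + m) + 1)).choose

noncomputable def slack : ℕ := weight n d m * (d + charPrime n d m * m)

noncomputable def crossingBound : ℕ := (n + 1) * (2 * slack n d m + 1)

def markerBound : ℕ := (4 * weight n d m + 2) ^ n

noncomputable def lineLength : ℕ := markerBound n d m * crossingBound n d m + charPrime n d m

noncomputable def separation : ℕ := d + (lineLength n d m + charPrime n d m) * m

noncomputable def markerRadius : ℕ := weight n d m * separation n d m

noncomputable def colorRadius : ℕ := 2 * markerRadius n d m + d

noncomputable def keptSet : Set (Space n) :=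
  {x | x ∈ FreePart n ∧ IsKept (radix d m) (markerRadius n d m) (colorRadius n d m)
    (adicChar (radix d m) (charPrime n d m)) d x}

lemma radix_pos : 0 < radix d m := Nat.succ_pos _

lemma charPrime_prime : (charPrime n d m).Prime :=
  (Nat.exists_infinite_primes _).choose_spec.2

lemma weight_mul_lt_charPrime : weight n d m * (d + m) < charPrime n d m :=
  (Nat.exists_infinite_primes _).choose_spec.1

lemma slack_le_markerRadius : slack n d m ≤ markerRadius n d m := by
  unfold slack markerRadius separation
  exact Nat.mul_le_mul_left _ (by nlinarith)

variable {n d m}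

lemma eq_zero_of_adicChar_eq_zero_of_gnorm_le {g : Fin n → ℤ} {B : ℕ} (hB : B ≤ d + m)
    (hg : gnorm g ≤ B) (h : adicChar (radix d m) (charPrime n d m) g = 0) : g = 0 := by
  refine eq_zero_of_adicChar_eq_zero (by unfold radix; omega) ?_ h
  calc wnorm (radix d m) g ≤ weight n d m * gnorm g := wnorm_le_mul_gnorm g
    _ ≤ weight n d m * (d + m) := Nat.mul_le_mul_left _ (hg.trans hB)
    _ < charPrime n d m := weight_mul_lt_charPrime n d m

lemma isClopen_keptSet : IsClopen {x : FreePart n | (x : Space n) ∈ keptSet n d m} := by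
  have h : LocallyConstantOnFree (IsKept (n := n) (radix d m) (markerRadius n d m)
      (colorRadius n d m) (adicChar (radix d m) (charPrime n d m)) d) :=
    locallyConstantOnFree_isKept (by unfold colorRadius; omega)
  convert h.isClopen using 3 with x
  exact and_iff_right x.2

lemma eq_zero_of_mem_keptSet {x : Space n} (hx : x ∈ keptSet n d m) {g : Fin n → ℤ}
    (hgx : shift g x ∈ keptSet n d m) (hgd : gnorm g ≤ d) : g = 0 :=
  eq_zero_of_isKept (fun _ hg => eq_zero_of_adicChar_eq_zero_of_gnorm_le (Nat.le_add_right d m) hg)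
    (by unfold colorRadius; omega) hx.1 hgd hx.2 hgx.2

open Classical in
lemma card_markers_le {x : Space n} (hx : x ∈ FreePart n) :
    #((supBall n (markerBound n d m * crossingBound n d m * m + markerRadius n d m +
        slack n d m)).filter fun v =>
      IsMarker (radix d m) (markerRadius n d m) (colorRadius n d m) (shift v x)) ≤
      markerBound n d m := by
  refine (card_filter_isMarker_le (Q := markerRadius n d m) (R := colorRadius n d m)
    (radix_pos d m) (by unfold colorRadius; omega) hx (q := separation n d m) le_rfl _).trans
    (Nat.pow_le_pow_left ?_ n)
  refine Nat.succ_le_of_lt ((Nat.div_lt_iff_lt_mul (Nat.succ_pos _)).2 ?_)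
  have h₁ : markerBound n d m * crossingBound n d m * m ≤ separation n d m := by
    unfold separation lineLength
    nlinarith
  have h₂ := slack_le_markerRadius n d m
  have h₃ : markerRadius n d m = weight n d m * separation n d m := rfl
  nlinarith

lemma exists_isDeep_on_line {x : Space n} (hx : x ∈ FreePart n) {s : Fin n → ℤ} (hs : s ≠ 0)
    (hsm : gnorm s ≤ m) : ∃ k ≤ markerBound n d m * crossingBound n d m, ∃ w,
      IsDeep (radix d m) (markerRadius n d m) (colorRadius n d m) (slack n d m) x
        ((k : ℤ) • s) w := by
  by_contra! hno
  have hcard := succ_le_card_mul_of_forall_not_isDeep hs hsm (by unfold radix; omega)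
    (slack_le_markerRadius n d m) hno
  have := Nat.mul_le_mul_right (crossingBound n d m) (card_markers_le (d := d) (m := m) hx)
  unfold crossingBound at *
  omega

lemma exists_shift_mem_keptSet {x : Space n} (hx : x ∈ FreePart n) {s : Fin n → ℤ}
    (hs : s ≠ 0) (hsm : gnorm s ≤ m) :
    ∃ k ≤ lineLength n d m, shift ((k : ℤ) • s) x ∈ keptSet n d m := by
  have := Fact.mk (charPrime_prime n d m)
  obtain ⟨k₀, hk₀, w, hw⟩ := exists_isDeep_on_line hx hs hsm
  have hψs : adicChar (radix d m) (charPrime n d m) s ≠ 0 := fun h =>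
    hs (eq_zero_of_adicChar_eq_zero_of_gnorm_le (Nat.le_add_left m d) hsm h)
  obtain ⟨a, ha, hwa⟩ := ZMod.exists_lt_nsmul_eq hψs
    (adicChar (radix d m) (charPrime n d m) (w - (k₀ : ℤ) • s))
  have hk : ((k₀ + a : ℕ) : ℤ) • s = (k₀ : ℤ) • s + (a : ℤ) • s := by push_cast; rw [add_smul]
  refine ⟨k₀ + a, by unfold lineLength; omega, shift_mem_freePart hx _,
    isKept_shift_of_isDeep (radix_pos d m) (by unfold colorRadius; omega) hx hw ?_ ?_⟩
  · rw [hk, add_sub_cancel_left]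
    have h₁ : wnorm (radix d m) ((a : ℤ) • s) ≤ weight n d m * (a * m) :=
      (wnorm_le_mul_gnorm _).trans
        (Nat.mul_le_mul_left _ ((gnorm_natCast_smul_le a s).trans (Nat.mul_le_mul_left a hsm)))
    have h₂ : weight n d m * (a * m) ≤ weight n d m * (charPrime n d m * m) :=
      Nat.mul_le_mul_left _ (Nat.mul_le_mul_right _ ha.le)
    change _ + weight n d m * d ≤ weight n d m * (d + charPrime n d m * m)
    rw [mul_add]
    omega
  · rw [hk, ← sub_sub, map_sub, hwa, map_zsmul, natCast_zsmul, sub_self]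

end Construction

theorem stmt13_general (n d : ℕ) (hn : 1 ≤ n)
    (S : Finset (Fin n → ℤ))
    (hS : ∀ g ∈ S, (Finset.univ.filter fun i => g i ≠ 0).card = 1 ∨
                   (Finset.univ.filter fun i => g i ≠ 0).card = n) :
    ∃ (Δ : ℕ) (M : Set (Space n)),
      d ≤ Δ ∧ M ⊆ FreePart n ∧
      IsClopen {x : FreePart n | (x : Space n) ∈ M} ∧
      (∀ x ∈ M, ∀ g : Fin n → ℤ, g ≠ 0 → shift g x ∈ M → d ≤ gnorm g) ∧
      (∀ g ∈ S, ∀ x ∈ FreePart n, ∃ a b : ℕ, a ≤ Δ ∧ b ≤ Δ ∧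
        shift ((a : ℤ) • g) x ∈ M ∧ shift ((-(b : ℤ)) • g) x ∈ M) := by
  set m := S.sup gnorm
  refine ⟨lineLength n d m + d, keptSet n d m, Nat.le_add_left d _, fun x hx => hx.1,
    isClopen_keptSet, fun x hx g hg hgx => ?_, fun g hgS x hx => ?_⟩
  · by_contra! hlt
    exact hg (eq_zero_of_mem_keptSet hx hgx hlt.le)
  · have hg : g ≠ 0 := by
      rintro rfl
      rcases hS 0 hgS with h | h
      · simp at h
      · simp at h
        omega
    have hgm : gnorm g ≤ m := le_sup hgS
    obtain ⟨a, ha, hax⟩ := exists_shift_mem_keptSet (d := d) hx hg hgm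
    obtain ⟨b, hb, hbx⟩ := exists_shift_mem_keptSet (d := d) (m := m) hx (neg_ne_zero.2 hg)
      (by rwa [gnorm_neg])
    exact ⟨a, b, by omega, by omega, hax, by rwa [neg_smul, ← smul_neg]⟩

theorem stmt13 (n d : ℕ) (hn : 1 ≤ n) (hd : 1 ≤ d)
    (S : Finset (Fin n → ℤ))
    (hgen : AddSubgroup.closure (S : Set (Fin n → ℤ)) = ⊤)
    (hS : ∀ g ∈ S, (Finset.univ.filter fun i => g i ≠ 0).card = 1 ∨
                   (Finset.univ.filter fun i => g i ≠ 0).card = n) :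
    ∃ (Δ : ℕ) (M : Set (Space n)),
      d ≤ Δ ∧ M ⊆ FreePart n ∧
      IsClopen {x : FreePart n | (x : Space n) ∈ M} ∧
      (∀ x ∈ M, ∀ g : Fin n → ℤ, g ≠ 0 → shift g x ∈ M → d ≤ gnorm g) ∧
      (∀ g ∈ S, ∀ x ∈ FreePart n, ∃ a b : ℕ, a ≤ Δ ∧ b ≤ Δ ∧
        shift ((a : ℤ) • g) x ∈ M ∧ shift ((-(b : ℤ)) • g) x ∈ M) :=
  stmt13_general n d hn S hS
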